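/- Let D be a finite DAG with vertices partitioned into sources S, internal vertices I, and sinks T. If the internal vertices are eliminated in a forward topological order (each vertex eliminated only after all of its predecessors in I), then the total cost incurred is at most |S| · |E(D)|. Symmetrically, eliminating in reverse topological order incurs cost at most |T| · |E(D)|. -/

import Mathlib

variable {V : Type*} [DecidableEq V] [Fintype V]

/-- In-neighborhood of `v` in the edge set `E`. -/
def inN (E : Finset (V × V)) (v : V) : Finset V :=
  (E.filter fun p => p.2 = v).image Prod.fst

/-- Out-neighborhood of `v` in the edge set `E`. -/
def outN (E : Finset (V × V)) (v : V) : Finset V :=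
  (E.filter fun p => p.1 = v).image Prod.snd

/-- Elimination of vertex `v`: delete `v` and add an edge from every in-neighbor
to every out-neighbor of `v` (if not already present). -/
def elimv (E : Finset (V × V)) (v : V) : Finset (V × V) :=
  (E ∪ (inN E v) ×ˢ (outN E v)).filter fun p => p.1 ≠ v ∧ p.2 ≠ v

/-- Eliminate a sequence of vertices, in order. -/
def elimSeq (E : Finset (V × V)) (σ : List V) : Finset (V × V) :=
  σ.foldl elimv E

/-- Markowitz degree of `v`: in-degree times out-degree. -/
def mark (E : Finset (V × V)) (v : V) : ℕ :=
  (inN E v).card * (outN E v).card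

/-- Cost of an elimination sequence: sum of the Markowitz degrees at the
time of each elimination. -/
def cost (E : Finset (V × V)) : List V → ℕ
  | [] => 0
  | v :: σ => mark E v + cost (elimv E v) σ

/-- The directed graph with edge set `E` is acyclic. -/
def Acyclic (E : Finset (V × V)) : Prop :=
  ∀ v : V, ¬ Relation.TransGen (fun a b => (a, b) ∈ E) v v

/-- `E` is an acyclic digraph whose vertices are partitioned into sources `S`
(no in-edges), internal vertices `I`, and sinks `T` (no out-edges). -/
def IsDAGPartition (E : Finset (V × V)) (S I T : Finset V) : Prop :=
  Acyclic E ∧ Disjoint S I ∧ Disjoint S T ∧ Disjoint I T ∧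
    S ∪ I ∪ T = Finset.univ ∧ (∀ s ∈ S, inN E s = ∅) ∧ (∀ t ∈ T, outN E t = ∅)

/-- There is a directed path from `i` to `j` all of whose internal vertices
lie in `X` (the single-edge path has no internal vertices). -/
def PathThrough (E : Finset (V × V)) (X : Finset V) (i j : V) : Prop :=
  ∃ l : List V, (∀ v ∈ l, v ∈ X) ∧ List.Chain' (fun a b => (a, b) ∈ E) (i :: (l ++ [j]))

/-!
In forward order every fill edge starts at a source. Indeed, when `v` is eliminated, an in-neighbour
of `v` that is not a source is joined to `v` by an original edge; it cannot be a sink, and being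
internal it precedes `v` and has already been deleted. So the step costs at most `|S| · outdeg v`,
while it deletes the `outdeg v` out-edges of `v` and creates only edges leaving `S`. Hence the
number of edges not leaving `S`, initially at most `|E|`, pays for the whole elimination. Reverse
order is forward order in the reversed graph, which has the same elimination costs and the sinks as
sources.
-/

open Finset

section Elimination

variable {α : Type*} [DecidableEq α] {E E₀ : Finset (α × α)} {S : Finset α} {v : α} {r : List α}

lemma List.Nodup.pairwise_of_idxOf_lt {R : α → α → Prop} {l : List α} (hl : l.Nodup)
    (h : ∀ a ∈ l, ∀ b ∈ l, l.idxOf a < l.idxOf b → R a b) : l.Pairwise R := by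
  refine List.pairwise_iff_getElem.mpr fun i j hi hj hij => h _ (l.getElem_mem hi) _
    (l.getElem_mem hj) ?_
  rwa [hl.idxOf_getElem, hl.idxOf_getElem]

@[simp]
lemma mem_inN {a : α} : a ∈ inN E v ↔ (a, v) ∈ E := by
  simp [inN]

@[simp]
lemma mem_outN {b : α} : b ∈ outN E v ↔ (v, b) ∈ E := by
  simp [outN]

lemma mem_elimv {p : α × α} :
    p ∈ elimv E v ↔ (p ∈ E ∨ ((p.1, v) ∈ E ∧ (v, p.2) ∈ E)) ∧ p.1 ≠ v ∧ p.2 ≠ v := by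
  simp [elimv]

lemma mark_le_of_inN_subset (h : inN E v ⊆ S) : mark E v ≤ #S * #(outN E v) :=
  Nat.mul_le_mul_right _ (card_le_card h)

lemma card_filter_elimv_add_card_outN_le (hin : inN E v ⊆ S) (hv : v ∉ S) :
    #((elimv E v).filter (·.1 ∉ S)) + #(outN E v) ≤ #(E.filter (·.1 ∉ S)) := by
  set out := E.filter (·.1 = v)
  have hout : out ⊆ E.filter (·.1 ∉ S) := by
    intro p hp
    simp only [out, mem_filter] at hp ⊢
    exact ⟨hp.1, hp.2 ▸ hv⟩
  have hsub : (elimv E v).filter (·.1 ∉ S) ⊆ E.filter (·.1 ∉ S) \ out := by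
    intro p hp
    obtain ⟨hpE, hpS⟩ := mem_filter.mp hp
    obtain ⟨hp | ⟨hpv, -⟩, hp1, -⟩ := mem_elimv.mp hpE
    · simp [out, hp, hpS, hp1]
    · exact absurd (hin (mem_inN.mpr hpv)) hpS
  calc #((elimv E v).filter (·.1 ∉ S)) + #(outN E v)
      ≤ #(E.filter (·.1 ∉ S) \ out) + #out := add_le_add (card_le_card hsub) card_image_le
    _ = #(E.filter (·.1 ∉ S)) := card_sdiff_add_card_eq_card hout

/-- Holds for every graph reached from `E₀` by elimination while `r` remains to be eliminated. -/
def FillInvariant (E₀ : Finset (α × α)) (S : Finset α) (r : List α) (E : Finset (α × α)) : Prop :=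
  ∀ p ∈ E, p.1 ∈ S ∨ (p ∈ E₀ ∧ p.1 ∈ r)

lemma FillInvariant.inN_subset (h : FillInvariant E₀ S (v :: r) E)
    (hv : ∀ a ∈ v :: r, (a, v) ∉ E₀) : inN E v ⊆ S := by
  intro a ha
  rcases h _ (mem_inN.mp ha) with haS | ⟨haE₀, har⟩
  · exact haS
  · exact absurd haE₀ (hv a har)

lemma FillInvariant.step (h : FillInvariant E₀ S (v :: r) E)
    (hv : ∀ a ∈ v :: r, (a, v) ∉ E₀) : FillInvariant E₀ S r (elimv E v) := by
  intro p hp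
  obtain ⟨hp | ⟨hpv, -⟩, hp1, -⟩ := mem_elimv.mp hp
  · rcases h p hp with hpS | ⟨hpE₀, hpr⟩
    · exact .inl hpS
    · exact .inr ⟨hpE₀, (List.mem_cons.mp hpr).resolve_left hp1⟩
  · exact .inl (h.inN_subset hv (mem_inN.mpr hpv))

theorem FillInvariant.cost_le (hr : r.Pairwise fun a b => (b, a) ∉ E₀)
    (hloop : ∀ v ∈ r, (v, v) ∉ E₀) (hrS : ∀ v ∈ r, v ∉ S) (h : FillInvariant E₀ S r E) :
    cost E r ≤ #S * #(E.filter (·.1 ∉ S)) := by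
  induction r generalizing E with
  | nil => simp [cost]
  | cons v r ih =>
    obtain ⟨hv_r, hr⟩ := List.pairwise_cons.mp hr
    have hv : ∀ a ∈ v :: r, (a, v) ∉ E₀ := by
      rintro a (_ | ⟨_, ha⟩)
      exacts [hloop v List.mem_cons_self, hv_r a ha]
    have hin := h.inN_subset hv
    calc cost E (v :: r)
        = mark E v + cost (elimv E v) r := rfl
      _ ≤ #S * #(outN E v) + #S * #((elimv E v).filter (·.1 ∉ S)) :=
        add_le_add (mark_le_of_inN_subset hin)
          (ih hr (fun w hw => hloop w (List.mem_cons_of_mem v hw))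
            (fun w hw => hrS w (List.mem_cons_of_mem v hw)) (h.step hv))
      _ ≤ #S * #(E.filter (·.1 ∉ S)) := by
        rw [← mul_add, add_comm]
        exact Nat.mul_le_mul_left _
          (card_filter_elimv_add_card_outN_le hin (hrS v List.mem_cons_self))

theorem cost_le_of_forall_idxOf_lt [Fintype α] {I T : Finset α} {σ : List α}
    (hSI : Disjoint S I) (hcov : S ∪ I ∪ T = univ) (hT : ∀ t ∈ T, outN E t = ∅)
    (hσ : σ.Nodup) (hσI : σ.toFinset = I)
    (hfwd : ∀ a b : α, (a, b) ∈ E → a ∈ I → b ∈ I → σ.idxOf a < σ.idxOf b) :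
    cost E σ ≤ #S * #E := by
  have hσI' : ∀ v ∈ σ, v ∈ I := fun v hv => hσI ▸ List.mem_toFinset.mpr hv
  have hloop : ∀ v ∈ σ, (v, v) ∉ E := fun v hv he =>
    (hfwd v v he (hσI' v hv) (hσI' v hv)).false
  have hpair : σ.Pairwise fun a b => (b, a) ∉ E := hσ.pairwise_of_idxOf_lt
    fun a ha b hb hab hba => (hfwd b a hba (hσI' b hb) (hσI' a ha)).not_gt hab
  have hinit : FillInvariant E S σ E := by
    intro p hp
    have hpT : p.1 ∉ T := fun h => by simpa [hT _ h] using mem_outN.mpr hp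
    have : p.1 ∈ S ∪ I ∪ T := hcov ▸ mem_univ _
    simp only [mem_union, hpT, or_false, ← hσI, List.mem_toFinset] at this
    exact this.imp_right (⟨hp, ·⟩)
  calc cost E σ ≤ #S * #(E.filter (·.1 ∉ S)) :=
        hinit.cost_le hpair hloop fun v hv hvS => disjoint_left.mp hSI hvS (hσI' v hv)
    _ ≤ #S * #E := Nat.mul_le_mul_left _ (card_filter_le _ _)

end Elimination

section Reversal

variable {α : Type*} {E : Finset (α × α)}

def revEdges (E : Finset (α × α)) : Finset (α × α) :=
  E.map (Equiv.prodComm α α).toEmbedding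

@[simp]
lemma mem_revEdges {p : α × α} : p ∈ revEdges E ↔ p.swap ∈ E := by
  simp [revEdges, mem_map_equiv]

variable [DecidableEq α] {v : α}

lemma inN_revEdges : inN (revEdges E) v = outN E v := by
  ext; simp

lemma outN_revEdges : outN (revEdges E) v = inN E v := by
  ext; simp

lemma elimv_revEdges : elimv (revEdges E) v = revEdges (elimv E v) := by
  ext p
  simp only [mem_elimv, mem_revEdges, Prod.fst_swap, Prod.snd_swap]
  tauto

lemma cost_revEdges (r : List α) : cost (revEdges E) r = cost E r := by
  induction r generalizing E with
  | nil => rfl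
  | cons v r ih =>
    simp only [cost, mark, inN_revEdges, outN_revEdges, elimv_revEdges, ih, mul_comm]

end Reversal

/-- eliminating in forward topological order costs at most
`|S|·|E|`; eliminating in reverse topological order costs at most `|T|·|E|`. -/
theorem cost_topo_order (E : Finset (V × V)) (S I T : Finset V)
    (hD : IsDAGPartition E S I T)
    (σ τ : List V) (hσ : σ.Nodup) (hσI : σ.toFinset = I)
    (hτ : τ.Nodup) (hτI : τ.toFinset = I)
    (hfwd : ∀ a b : V, (a, b) ∈ E → a ∈ I → b ∈ I → σ.idxOf a < σ.idxOf b)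
    (hrev : ∀ a b : V, (a, b) ∈ E → a ∈ I → b ∈ I → τ.idxOf b < τ.idxOf a) :
    cost E σ ≤ S.card * E.card ∧ cost E τ ≤ T.card * E.card := by
  obtain ⟨-, hSI, -, hIT, hcov, hS, hT⟩ := hD
  refine ⟨cost_le_of_forall_idxOf_lt hSI hcov hT hσ hσI hfwd, ?_⟩
  have hcov' : T ∪ I ∪ S = univ := by rw [← hcov]; ext; simp only [mem_union]; tauto
  have hS' : ∀ s ∈ S, outN (revEdges E) s = ∅ := fun s hs => outN_revEdges.trans (hS s hs)
  have h := cost_le_of_forall_idxOf_lt hIT.symm hcov' hS' hτ hτI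
    fun a b hab ha hb => hrev b a (mem_revEdges.mp hab) hb ha
  rwa [cost_revEdges, revEdges, card_map] at h
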